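/- arXiv:1201.4141 — 5 statements merged into one kernel-verified Lean document; each statement's English description precedes it below -/
import Mathlib

section
/- Let ν¹ and ν² be real eigenvectors of B = Aᵀ corresponding to distinct real eigenvalues λ₁ ≠ λ₂, and let h₁, h₂ be real numbers, not both zero, with λ₁h₁ + λ₂h₂ = 0. Then the function F(x) = |ν¹·x|^{h₁} |ν²·x|^{h₂} is an autonomous first integral of the system dx/dt = Ax on any open set where ν¹·x ≠ 0 and ν²·x ≠ 0, i.e. (∇F(x))·(Ax) = 0 there. -/
/-!
Along a trajectory, `ν ⬝ᵥ x` evolves by `d/dt (ν ⬝ᵥ x) = ν ⬝ᵥ A x = (Aᵀ ν) ⬝ᵥ x = λ (ν ⬝ᵥ x)`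
for an eigenvector `ν` of `Aᵀ`. The logarithmic derivative of `|ν₁ ⬝ᵥ x|^h₁ |ν₂ ⬝ᵥ x|^h₂`
along the flow is therefore the constant `λ₁h₁ + λ₂h₂`, which vanishes.
-/

open Matrix

section AbsRpow

variable {E : Type*} [NormedAddCommGroup E] [NormedSpace ℝ E]
  {f g : E → ℝ} {f' g' : E →L[ℝ] ℝ} {x : E}

theorem HasFDerivAt.abs_rpow_const (p : ℝ) (hf : HasFDerivAt f f' x) (hx : f x ≠ 0) :
    HasFDerivAt (fun y => |f y| ^ p) ((p * |f x| ^ p / f x) • f') x := by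
  convert (hf.abs hx).rpow_const (p := p) (Or.inl (abs_ne_zero.mpr hx)) using 1
  rw [smul_smul, Real.rpow_sub_one (abs_ne_zero.mpr hx)]
  congr 1
  rcases hx.lt_or_gt with hneg | hpos
  · simp only [sign_neg hneg, _root_.abs_of_neg hneg, SignType.coe_neg, SignType.coe_one]
    field_simp
  · simp only [sign_pos hpos, _root_.abs_of_pos hpos, SignType.coe_one]
    field_simp

theorem fderiv_abs_rpow_mul_abs_rpow_apply (p q : ℝ) (hf : HasFDerivAt f f' x)
    (hg : HasFDerivAt g g' x) (hfx : f x ≠ 0) (hgx : g x ≠ 0) (v : E) :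
    fderiv ℝ (fun y => |f y| ^ p * |g y| ^ q) x v
      = (p * f' v / f x + q * g' v / g x) * (|f x| ^ p * |g x| ^ q) := by
  rw [((hf.abs_rpow_const p hfx).fun_mul (hg.abs_rpow_const q hgx)).fderiv]
  simp only [_root_.add_apply, _root_.smul_apply, smul_eq_mul]
  field_simp
  ring

end AbsRpow

theorem Matrix.dotProduct_mulVec_of_transpose_mulVec_eq_smul {ι R : Type*} [Fintype ι]
    [CommSemiring R] {A : Matrix ι ι R} {ν : ι → R} {μ : R} (hν : Aᵀ *ᵥ ν = μ • ν) (x : ι → R) :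
    ν ⬝ᵥ (A *ᵥ x) = μ * (ν ⬝ᵥ x) := by
  rw [dotProduct_mulVec, ← mulVec_transpose, hν, smul_dotProduct, smul_eq_mul]

theorem first_integral_two_real_eigenvectors_general
    (n : ℕ) (A : Matrix (Fin n) (Fin n) ℝ)
    (ν₁ ν₂ : Fin n → ℝ)
    (lam₁ lam₂ : ℝ)
    (heig₁ : Aᵀ.mulVec ν₁ = lam₁ • ν₁) (heig₂ : Aᵀ.mulVec ν₂ = lam₂ • ν₂)
    (h₁ h₂ : ℝ) (hsol : lam₁ * h₁ + lam₂ * h₂ = 0) :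
    ∀ x : Fin n → ℝ, ν₁ ⬝ᵥ x ≠ 0 → ν₂ ⬝ᵥ x ≠ 0 →
      fderiv ℝ (fun y => |ν₁ ⬝ᵥ y| ^ h₁ * |ν₂ ⬝ᵥ y| ^ h₂) x (A.mulVec x) = 0 := by
  intro x hx₁ hx₂
  have hasFDerivAt_dotProduct (ν : Fin n → ℝ) :
      HasFDerivAt (ν ⬝ᵥ ·) (dotProductBilin ℝ ℝ ν).toContinuousLinearMap x :=
    (dotProductBilin ℝ ℝ ν).toContinuousLinearMap.hasFDerivAt
  rw [fderiv_abs_rpow_mul_abs_rpow_apply h₁ h₂ (hasFDerivAt_dotProduct ν₁)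
    (hasFDerivAt_dotProduct ν₂) hx₁ hx₂]
  change (h₁ * (ν₁ ⬝ᵥ A *ᵥ x) / _ + h₂ * (ν₂ ⬝ᵥ A *ᵥ x) / _) * _ = 0
  rw [dotProduct_mulVec_of_transpose_mulVec_eq_smul heig₁,
    dotProduct_mulVec_of_transpose_mulVec_eq_smul heig₂]
  field_simp
  linear_combination (|ν₁ ⬝ᵥ x| ^ h₁ * |ν₂ ⬝ᵥ x| ^ h₂) * hsol

/-- Theorem 1.1: if `ν¹, ν²` are real eigenvectors of `Aᵀ` with distinct eigenvalues
`λ₁ ≠ λ₂` and `λ₁h₁ + λ₂h₂ = 0` with `(h₁,h₂) ≠ (0,0)`, then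
`F(x) = |ν¹·x|^{h₁}|ν²·x|^{h₂}` is an autonomous first integral of `dx/dt = Ax`
wherever `ν¹·x ≠ 0` and `ν²·x ≠ 0`. -/
theorem first_integral_two_real_eigenvectors
    (n : ℕ) (A : Matrix (Fin n) (Fin n) ℝ)
    (ν₁ ν₂ : Fin n → ℝ) (hν₁ : ν₁ ≠ 0) (hν₂ : ν₂ ≠ 0)
    (lam₁ lam₂ : ℝ) (hlam : lam₁ ≠ lam₂)
    (heig₁ : Aᵀ.mulVec ν₁ = lam₁ • ν₁) (heig₂ : Aᵀ.mulVec ν₂ = lam₂ • ν₂)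
    (h₁ h₂ : ℝ) (hh : ¬(h₁ = 0 ∧ h₂ = 0)) (hsol : lam₁ * h₁ + lam₂ * h₂ = 0) :
    ∀ x : Fin n → ℝ, ν₁ ⬝ᵥ x ≠ 0 → ν₂ ⬝ᵥ x ≠ 0 →
      fderiv ℝ (fun y => |ν₁ ⬝ᵥ y| ^ h₁ * |ν₂ ⬝ᵥ y| ^ h₂) x (A.mulVec x) = 0 :=
  first_integral_two_real_eigenvectors_general n A ν₁ ν₂ lam₁ lam₂ heig₁ heig₂ h₁ h₂ hsol
end

section
/- For polynomials u₁, u₂: ℝⁿ → ℝ, the product u₁u₂ is a polynomial partial integral of the system dx/dt = Ax (i.e. 𝔄(u₁u₂) is divisible by u₁u₂) if and only if u₁ and u₂ are each polynomial partial integrals (i.e. 𝔄u₁ is divisible by u₁ and 𝔄u₂ is divisible by u₂). -/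
/-!
`𝔄` is a derivation of `ℝ[x]`, so everything follows from a fact about any derivation `D` of a
unique factorization domain containing `ℚ`: for `w ≠ 0`, `w ∣ D w` iff `p ∣ D p` for every prime
factor `p` of `w`. Indeed, if `w = p ^ k * s` with `p ∤ s`, then
`D w ≡ k p ^ (k - 1) s D p (mod p ^ k)`, and `k` is invertible; conversely the condition is
stable under products by the Leibniz rule. The condition on prime factors of `u₁ u₂` is the
conjunction of the conditions for `u₁` and for `u₂`.
-/

open Matrix MvPolynomial

/-- The Lie derivative of a polynomial along the linear vector field `x ↦ Ax`:
`𝔄u = ∑ᵢ (Ax)ᵢ ∂u/∂xᵢ`. -/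
noncomputable def polyLieDeriv {n : ℕ} (A : Matrix (Fin n) (Fin n) ℝ)
    (u : MvPolynomial (Fin n) ℝ) : MvPolynomial (Fin n) ℝ :=
  ∑ i, (∑ j, C (A i j) * X j) * pderiv i u

namespace Derivation

variable {S R : Type*} [CommRing S] [CommRing R] [Algebra S R] (D : Derivation S R R)

theorem mul_dvd_apply_mul {a b : R} (ha : a ∣ D a) (hb : b ∣ D b) : a * b ∣ D (a * b) := by
  rw [leibniz, smul_eq_mul, smul_eq_mul]
  exact dvd_add (mul_dvd_mul_left a hb) (mul_comm b a ▸ mul_dvd_mul_left b ha)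

theorem prime_dvd_apply_of_dvd_apply [IsDomain R] [WfDvdMonoid R] [Algebra ℚ R]
    {w p : R} (hw : w ≠ 0) (hdvd : w ∣ D w) (hp : Prime p) (hpw : p ∣ w) : p ∣ D p := by
  obtain ⟨k, s, hps, rfl⟩ := WfDvdMonoid.max_power_factor hw hp.irreducible
  obtain ⟨m, rfl⟩ : ∃ m, k = m + 1 :=
    Nat.exists_eq_succ_of_ne_zero <| by rintro rfl; exact hps (by simpa using hpw)
  have hunit : IsUnit ((m + 1 : ℕ) : R) := by
    simpa using (IsUnit.mk0 ((m + 1 : ℕ) : ℚ) (by positivity)).map (algebraMap ℚ R)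
  have hcancel : p ^ m * p ∣ p ^ m * ((m + 1 : ℕ) * (D p * s)) := by
    have := (dvd_mul_right _ s).trans hdvd
    rw [leibniz, leibniz_pow, smul_eq_mul, dvd_add_right (dvd_mul_right _ _)] at this
    rw [← pow_succ]
    convert this using 1
    rw [Nat.add_sub_cancel, nsmul_eq_mul, smul_eq_mul, smul_eq_mul]
    ring
  have hdvd' := (mul_dvd_mul_iff_left (pow_ne_zero m hp.ne_zero)).mp hcancel
  exact (hp.dvd_mul.mp (hunit.dvd_mul_left.mp hdvd')).resolve_right hps

theorem dvd_apply_of_forall_prime_dvd [IsDomain R] [UniqueFactorizationMonoid R] {w : R}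
    (hw : w ≠ 0) (h : ∀ p, Prime p → p ∣ w → p ∣ D p) : w ∣ D w := by
  induction w using UniqueFactorizationMonoid.induction_on_prime with
  | h₁ => exact absurd rfl hw
  | h₂ u hu => exact hu.dvd
  | h₃ a p _ hp ih =>
    exact mul_dvd_apply_mul D (h p hp (dvd_mul_right p a))
      (ih (right_ne_zero_of_mul hw) fun q hq hqa => h q hq (hqa.mul_left p))

theorem dvd_apply_iff_forall_prime_dvd [IsDomain R] [UniqueFactorizationMonoid R] [Algebra ℚ R]
    {w : R} (hw : w ≠ 0) : w ∣ D w ↔ ∀ p, Prime p → p ∣ w → p ∣ D p :=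
  ⟨fun h _ hp hpw => prime_dvd_apply_of_dvd_apply D hw h hp hpw,
    dvd_apply_of_forall_prime_dvd D hw⟩

end Derivation

noncomputable def polyLieDerivation {n : ℕ} (A : Matrix (Fin n) (Fin n) ℝ) :
    Derivation ℝ (MvPolynomial (Fin n) ℝ) (MvPolynomial (Fin n) ℝ) :=
  ∑ i, (∑ j, C (A i j) * X j) • pderiv i

theorem polyLieDerivation_apply {n : ℕ} (A : Matrix (Fin n) (Fin n) ℝ)
    (u : MvPolynomial (Fin n) ℝ) : polyLieDerivation A u = polyLieDeriv A u := by
  rw [polyLieDerivation, ← Derivation.coeFnAddMonoidHom_apply, map_sum]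
  simp [polyLieDeriv, Derivation.coeFnAddMonoidHom_apply]

/-- Property 1.3: the product `u₁u₂` of nonzero polynomials is a polynomial
partial integral of `dx/dt = Ax` (i.e. `u₁u₂ ∣ 𝔄(u₁u₂)`) iff `u₁` and `u₂` are
each polynomial partial integrals. -/
theorem product_partial_integral_iff
    (n : ℕ) (A : Matrix (Fin n) (Fin n) ℝ)
    (u₁ u₂ : MvPolynomial (Fin n) ℝ) (h₁ : u₁ ≠ 0) (h₂ : u₂ ≠ 0) :
    (u₁ * u₂ ∣ polyLieDeriv A (u₁ * u₂)) ↔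
      ((u₁ ∣ polyLieDeriv A u₁) ∧ (u₂ ∣ polyLieDeriv A u₂)) := by
  simp only [← polyLieDerivation_apply, Derivation.dvd_apply_iff_forall_prime_dvd _ h₁,
    Derivation.dvd_apply_iff_forall_prime_dvd _ h₂,
    Derivation.dvd_apply_iff_forall_prime_dvd _ (mul_ne_zero h₁ h₂)]
  exact ⟨fun h => ⟨fun p hp hpu => h p hp (hpu.mul_right u₂),
      fun p hp hpu => h p hp (hpu.mul_left u₁)⟩,
    fun ⟨hu₁, hu₂⟩ p hp hpu => (hp.dvd_mul.mp hpu).elim (hu₁ p hp) (hu₂ p hp)⟩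
end

section
/- Let ν = ν* + iν̃ be a complex eigenvector of B = Aᵀ with eigenvalue λ = λ* + iλ̃. Then the function φ(x) = arctan((ν̃·x)/(ν*·x)) satisfies 𝔄φ(x) = λ̃ for all x in any open set where ν*·x ≠ 0. -/
open Matrix

/-! Writing `s = ν*·x` and `t = ν̃·x`, the real and imaginary parts of `Bν = λν` say that along
the flow `ẋ = Ax` the pair `(s, t)` moves by `ṡ = λ* s - λ̃ t`, `ṫ = λ̃ s + λ* t`: a rotation with
angular speed `λ̃` composed with a scaling by `λ*`. The angle `arctan (t / s)` ignores the scaling,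
so it grows at rate `(s ṫ - t ṡ) / (s² + t²) = λ̃`. -/

theorem Matrix.mulVec_eq_of_mulVec_complex_eq_smul {ι : Type*} [Fintype ι]
    (M : Matrix ι ι ℝ) (u v : ι → ℝ) (a b : ℝ)
    (h : M.map Complex.ofReal *ᵥ (fun i => (u i : ℂ) + v i * Complex.I)
      = ((a : ℂ) + b * Complex.I) • (fun i => (u i : ℂ) + v i * Complex.I)) :
    M *ᵥ u = a • u - b • v ∧ M *ᵥ v = b • u + a • v := by
  have hre i := congrArg Complex.re (congrFun h i)
  have him i := congrArg Complex.im (congrFun h i)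
  simp only [mulVec, dotProduct, Complex.re_sum, Complex.im_sum, map_apply, Pi.smul_apply,
    smul_eq_mul, Complex.mul_re, Complex.mul_im, Complex.add_re, Complex.add_im,
    Complex.ofReal_re, Complex.ofReal_im, Complex.I_re, Complex.I_im] at hre him
  constructor <;> ext i
  · simpa [mulVec, dotProduct] using hre i
  · simpa [mulVec, dotProduct, add_comm] using him i

theorem hasFDerivAt_dotProduct {ι : Type*} [Fintype ι] (v x : ι → ℝ) :
    HasFDerivAt (fun y => v ⬝ᵥ y) (LinearMap.toContinuousLinearMap (dotProductBilin ℝ ℝ v)) x :=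
  (LinearMap.toContinuousLinearMap (dotProductBilin ℝ ℝ v)).hasFDerivAt

theorem HasFDerivAt.arctan_div {E : Type*} [NormedAddCommGroup E] [NormedSpace ℝ E]
    {f g : E → ℝ} {f' g' : E →L[ℝ] ℝ} {x : E}
    (hf : HasFDerivAt f f' x) (hg : HasFDerivAt g g' x) (hx : f x ≠ 0) :
    HasFDerivAt (fun y => Real.arctan (g y / f y))
      ((f x ^ 2 + g x ^ 2)⁻¹ • (f x • g' - g x • f')) x := by
  simp only [div_eq_mul_inv]
  refine (hg.mul ((hasDerivAt_inv hx).comp_hasFDerivAt x hf)).arctan.congr_fderiv ?_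
  ext h
  simp only [Pi.mul_apply, Function.comp_apply, one_div, neg_smul, smul_neg, smul_add,
    _root_.add_apply, _root_.neg_apply, _root_.smul_apply, smul_eq_mul, _root_.sub_apply]
  field_simp
  ring

theorem arctan_lie_derivative_general
    (n : ℕ) (A : Matrix (Fin n) (Fin n) ℝ)
    (νs νt : Fin n → ℝ) (lams lamt : ℝ)
    (heig : (A.map Complex.ofReal)ᵀ.mulVec (fun i => (νs i : ℂ) + νt i * Complex.I)
      = ((lams : ℂ) + lamt * Complex.I) • (fun i => (νs i : ℂ) + νt i * Complex.I)) :
    ∀ x : Fin n → ℝ, νs ⬝ᵥ x ≠ 0 →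
      fderiv ℝ (fun y => Real.arctan ((νt ⬝ᵥ y) / (νs ⬝ᵥ y))) x (A.mulVec x) = lamt := by
  intro x hx
  obtain ⟨hs, ht⟩ := Aᵀ.mulVec_eq_of_mulVec_complex_eq_smul νs νt lams lamt
    (by simpa [transpose_map] using heig)
  have hAs : νs ⬝ᵥ A *ᵥ x = lams * (νs ⬝ᵥ x) - lamt * (νt ⬝ᵥ x) := by
    rw [dotProduct_mulVec, ← mulVec_transpose, hs]; simp [sub_dotProduct]
  have hAt : νt ⬝ᵥ A *ᵥ x = lamt * (νs ⬝ᵥ x) + lams * (νt ⬝ᵥ x) := by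
    rw [dotProduct_mulVec, ← mulVec_transpose, ht]; simp [add_dotProduct]
  rw [((hasFDerivAt_dotProduct νs x).arctan_div (hasFDerivAt_dotProduct νt x) hx).fderiv]
  simp only [_root_.smul_apply, _root_.sub_apply, LinearMap.coe_toContinuousLinearMap',
    dotProductBilin_apply_apply, smul_eq_mul, hAs, hAt]
  field_simp
  ring

/-- Property 1.5: if `ν = ν* + iν̃` is a complex eigenvector of `B = Aᵀ` with
eigenvalue `λ = λ* + iλ̃`, then `φ(x) = arctan((ν̃·x)/(ν*·x))` satisfies
`𝔄φ(x) = λ̃` wherever `ν*·x ≠ 0`. -/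
theorem arctan_lie_derivative
    (n : ℕ) (A : Matrix (Fin n) (Fin n) ℝ)
    (νs νt : Fin n → ℝ) (lams lamt : ℝ)
    (hν : (fun i => (νs i : ℂ) + νt i * Complex.I) ≠ (0 : Fin n → ℂ))
    (heig : (A.map Complex.ofReal)ᵀ.mulVec (fun i => (νs i : ℂ) + νt i * Complex.I)
      = ((lams : ℂ) + lamt * Complex.I) • (fun i => (νs i : ℂ) + νt i * Complex.I)) :
    ∀ x : Fin n → ℝ, νs ⬝ᵥ x ≠ 0 →
      fderiv ℝ (fun y => Real.arctan ((νt ⬝ᵥ y) / (νs ⬝ᵥ y))) x (A.mulVec x) = lamt :=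
  arctan_lie_derivative_general n A νs νt lams lamt heig
end

section
/- Let ν¹ = ν*¹ + iν̃¹ be a complex eigenvector of B = Aᵀ with eigenvalue λ₁ = λ₁* + iλ̃₁ (λ̃₁ ≠ 0), and ν² a real eigenvector of B with real eigenvalue λ₂. Then F(x) = (ν²·x) · exp(−(λ₂/λ̃₁) · arctan((ν̃¹·x)/(ν*¹·x))) is an autonomous first integral of dx/dt = Ax on any open set where ν*¹·x ≠ 0. -/
/-! Write `u = ν̃¹·x`, `v = ν*¹·x` and `g = ν²·x`. Taking real and imaginary parts of
`Aᵀν¹ = λ₁ν¹`, along `ẋ = Ax` we get `u̇ = λ̃₁ v + λ₁* u` and `v̇ = λ₁* v − λ̃₁ u`: the point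
`(v, u)` rotates with angular speed `λ̃₁`, so `arctan (u / v)` grows at the constant rate `λ̃₁`.
Since `ġ = λ₂ g`, the factor `exp (−(λ₂/λ̃₁) · arctan (u / v))` cancels the growth of `g`. -/

open Matrix

section Calculus

variable {E : Type*} [NormedAddCommGroup E] [NormedSpace ℝ E] {u v g : E → ℝ}
  {u' v' g' : E →L[ℝ] ℝ} {x : E}

theorem HasFDerivAt.arctan_div_s9 (hu : HasFDerivAt u u' x) (hv : HasFDerivAt v v' x)
    (hx : v x ≠ 0) :
    HasFDerivAt (fun y => Real.arctan (u y / v y))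
      ((u x ^ 2 + v x ^ 2)⁻¹ • (v x • u' - u x • v')) x := by
  have hdiv := hu.mul ((hasDerivAt_inv hx).comp_hasFDerivAt x hv)
  convert hdiv.arctan using 1
  · simp [div_eq_mul_inv, Function.comp_def]
  ext h
  have : u x ^ 2 + v x ^ 2 ≠ 0 := by positivity
  simp only [_root_.smul_apply, _root_.sub_apply, smul_eq_mul, Function.comp_def, Pi.mul_apply,
    one_div, neg_smul, smul_neg, smul_add, _root_.add_apply, _root_.neg_apply]
  field_simp
  ring

theorem fderiv_mul_exp_arctan_div_apply_eq_zero (hu : HasFDerivAt u u' x)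
    (hv : HasFDerivAt v v' x) (hg : HasFDerivAt g g' x) (hx : v x ≠ 0) {h : E} {a b c : ℝ}
    (ha : a ≠ 0) (hu' : u' h = a * v x + b * u x) (hv' : v' h = b * v x - a * u x)
    (hg' : g' h = c * g x) :
    fderiv ℝ (fun y => g y * Real.exp (-(c / a) * Real.arctan (u y / v y))) x h = 0 := by
  rw [(hg.fun_mul ((hu.arctan_div_s9 hv hx).const_mul _).exp).fderiv]
  simp only [_root_.add_apply, _root_.smul_apply, _root_.sub_apply, smul_eq_mul, hu', hv', hg']
  have : u x ^ 2 + v x ^ 2 ≠ 0 := by positivity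
  field_simp
  ring

end Calculus

theorem hasFDerivAt_dotProduct_s9 {m : Type*} [Fintype m] (w x : m → ℝ) :
    HasFDerivAt (w ⬝ᵥ ·) (dotProductBilin ℝ ℝ w).toContinuousLinearMap x :=
  (dotProductBilin ℝ ℝ w).toContinuousLinearMap.hasFDerivAt

theorem Matrix.mulVec_re_im_of_complex_eigenvector {m : Type*} [Fintype m] (A : Matrix m m ℝ)
    (a b : m → ℝ) (μ : ℂ)
    (h : A.map Complex.ofReal *ᵥ (fun i => (a i : ℂ) + b i * Complex.I)
      = μ • fun i => (a i : ℂ) + b i * Complex.I) :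
    A *ᵥ a = μ.re • a - μ.im • b ∧ A *ᵥ b = μ.im • a + μ.re • b := by
  constructor <;> funext i
  · simpa [mulVec, dotProduct, Complex.re_sum] using congrArg Complex.re (congrFun h i)
  · simpa [mulVec, dotProduct, Complex.im_sum, add_comm]
      using congrArg Complex.im (congrFun h i)

theorem first_integral_complex_and_real_eigenvectors_general
    (n : ℕ) (A : Matrix (Fin n) (Fin n) ℝ)
    (νs₁ νt₁ ν₂ : Fin n → ℝ) (lams₁ lamt₁ lam₂ : ℝ) (hlamt₁ : lamt₁ ≠ 0)
    (heig₁ : (A.map Complex.ofReal)ᵀ.mulVec (fun i => (νs₁ i : ℂ) + νt₁ i * Complex.I)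
      = ((lams₁ : ℂ) + lamt₁ * Complex.I) • (fun i => (νs₁ i : ℂ) + νt₁ i * Complex.I))
    (heig₂ : Aᵀ.mulVec ν₂ = lam₂ • ν₂) :
    ∀ x : Fin n → ℝ, νs₁ ⬝ᵥ x ≠ 0 →
      fderiv ℝ (fun y => (ν₂ ⬝ᵥ y)
          * Real.exp (-(lam₂ / lamt₁) * Real.arctan ((νt₁ ⬝ᵥ y) / (νs₁ ⬝ᵥ y))))
        x (A.mulVec x) = 0 := by
  intro x hx
  rw [← transpose_map] at heig₁
  obtain ⟨hAs, hAt⟩ := Aᵀ.mulVec_re_im_of_complex_eigenvector νs₁ νt₁ _ heig₁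
  have hA (w : Fin n → ℝ) : w ⬝ᵥ A *ᵥ x = Aᵀ *ᵥ w ⬝ᵥ x := by
    rw [dotProduct_mulVec, mulVec_transpose]
  refine fderiv_mul_exp_arctan_div_apply_eq_zero (hasFDerivAt_dotProduct_s9 νt₁ x)
    (hasFDerivAt_dotProduct_s9 νs₁ x) (hasFDerivAt_dotProduct_s9 ν₂ x) hx hlamt₁
    (b := lams₁) ?_ ?_ ?_
  · simp [hA, hAt, add_dotProduct]
  · simp [hA, hAs, sub_dotProduct]
  · simp [hA, heig₂]

/-- Theorem 1.3: `ν¹ = ν*¹ + iν̃¹` a complex eigenvector of `Aᵀ` with eigenvalue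
`λ₁ = λ₁* + iλ̃₁` (`λ̃₁ ≠ 0`), and `ν²` a real eigenvector with real eigenvalue `λ₂`;
then `F(x) = (ν²·x)·exp(−(λ₂/λ̃₁)·arctan((ν̃¹·x)/(ν*¹·x)))` is an autonomous first
integral of `dx/dt = Ax` wherever `ν*¹·x ≠ 0`. -/
theorem first_integral_complex_and_real_eigenvectors
    (n : ℕ) (A : Matrix (Fin n) (Fin n) ℝ)
    (νs₁ νt₁ ν₂ : Fin n → ℝ) (lams₁ lamt₁ lam₂ : ℝ) (hlamt₁ : lamt₁ ≠ 0)
    (hν₁ : (fun i => (νs₁ i : ℂ) + νt₁ i * Complex.I) ≠ (0 : Fin n → ℂ))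
    (hν₂ : ν₂ ≠ 0)
    (heig₁ : (A.map Complex.ofReal)ᵀ.mulVec (fun i => (νs₁ i : ℂ) + νt₁ i * Complex.I)
      = ((lams₁ : ℂ) + lamt₁ * Complex.I) • (fun i => (νs₁ i : ℂ) + νt₁ i * Complex.I))
    (heig₂ : Aᵀ.mulVec ν₂ = lam₂ • ν₂) :
    ∀ x : Fin n → ℝ, νs₁ ⬝ᵥ x ≠ 0 →
      fderiv ℝ (fun y => (ν₂ ⬝ᵥ y)
          * Real.exp (-(lam₂ / lamt₁) * Real.arctan ((νt₁ ⬝ᵥ y) / (νs₁ ⬝ᵥ y))))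
        x (A.mulVec x) = 0 :=
  first_integral_complex_and_real_eigenvectors_general n A νs₁ νt₁ ν₂ lams₁ lamt₁ lam₂ hlamt₁ heig₁
    heig₂
end

section
/- Suppose λ₁ and λ₂ are real eigenvalues of B = Aᵀ with real eigenvectors ν⁰¹, ν⁰² and first-order generalized eigenvectors ν¹¹, ν¹² satisfying (B − λ₁I)ν¹¹ = ν⁰¹ and (B − λ₂I)ν¹² = ν⁰². Then F(x) = (ν¹¹·x)/(ν⁰¹·x) − (ν¹²·x)/(ν⁰²·x) is an autonomous first integral of dx/dt = Ax on any open set where ν⁰¹·x ≠ 0 and ν⁰²·x ≠ 0. -/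
/-!
Along the flow of `ẋ = A x`, the linear forms `ℓ₀ = ν₀ ⬝ᵥ x` and `ℓ₁ = ν₁ ⬝ᵥ x` built from an
eigenvector `ν₀` of `Aᵀ` and a generalized eigenvector `ν₁` above it satisfy `ℓ₀' = λ ℓ₀` and
`ℓ₁' = ℓ₀ + λ ℓ₁`, so the quotient rule gives `(ℓ₁ / ℓ₀)' = 1`. Hence the difference of two such
quotients has derivative `1 - 1 = 0`.
-/

open Matrix

section QuotientRule

variable {𝕜 E : Type*} [NontriviallyNormedField 𝕜] [NormedAddCommGroup E] [NormedSpace 𝕜 E]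
  {c d : E → 𝕜} {c' d' : E →L[𝕜] 𝕜} {x : E}

theorem HasFDerivAt.fun_div (hc : HasFDerivAt c c' x) (hd : HasFDerivAt d d' x) (hx : d x ≠ 0) :
    HasFDerivAt (fun y => c y / d y) ((d x ^ 2)⁻¹ • (d x • c' - c x • d')) x := by
  simp only [div_eq_mul_inv]
  refine (hc.fun_mul ((hasFDerivAt_inv hx).comp x hd)).congr_fderiv ?_
  ext w
  simp [field]
  ring

theorem fderiv_fun_div_apply (hc : HasFDerivAt c c' x) (hd : HasFDerivAt d d' x) (hx : d x ≠ 0)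
    (w : E) : fderiv 𝕜 (fun y => c y / d y) x w = (c' w * d x - c x * d' w) / d x ^ 2 := by
  rw [(hc.fun_div hd hx).fderiv]
  simp [field]

end QuotientRule

namespace Matrix

variable {𝕜 ι : Type*} [NontriviallyNormedField 𝕜] [Fintype ι]

theorem hasFDerivAt_dotProduct [CompleteSpace 𝕜] (v x : ι → 𝕜) :
    HasFDerivAt (fun y => v ⬝ᵥ y) (LinearMap.toContinuousLinearMap (dotProductBilin 𝕜 𝕜 v)) x :=
  (LinearMap.toContinuousLinearMap (dotProductBilin 𝕜 𝕜 v)).hasFDerivAt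

theorem differentiableAt_dotProduct_div [CompleteSpace 𝕜] (ν₁ : ι → 𝕜) {ν₀ x : ι → 𝕜}
    (hx : ν₀ ⬝ᵥ x ≠ 0) : DifferentiableAt 𝕜 (fun y => (ν₁ ⬝ᵥ y) / (ν₀ ⬝ᵥ y)) x :=
  ((hasFDerivAt_dotProduct ν₁ x).fun_div (hasFDerivAt_dotProduct ν₀ x) hx).differentiableAt

theorem dotProduct_mulVec_eq_transpose_mulVec_dotProduct (A : Matrix ι ι 𝕜)
    (v x : ι → 𝕜) : v ⬝ᵥ A *ᵥ x = Aᵀ *ᵥ v ⬝ᵥ x := by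
  rw [dotProduct_mulVec, mulVec_transpose]

theorem fderiv_dotProduct_div_mulVec_eq_one [CompleteSpace 𝕜] {A : Matrix ι ι 𝕜}
    {ν₀ ν₁ : ι → 𝕜} {lam : 𝕜} (heig : Aᵀ *ᵥ ν₀ = lam • ν₀)
    (hgen : Aᵀ *ᵥ ν₁ - lam • ν₁ = ν₀) {x : ι → 𝕜} (hx : ν₀ ⬝ᵥ x ≠ 0) :
    fderiv 𝕜 (fun y => (ν₁ ⬝ᵥ y) / (ν₀ ⬝ᵥ y)) x (A *ᵥ x) = 1 := by
  rw [fderiv_fun_div_apply (hasFDerivAt_dotProduct ν₁ x) (hasFDerivAt_dotProduct ν₀ x) hx]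
  simp only [LinearMap.coe_toContinuousLinearMap', dotProductBilin_apply_apply,
    dotProduct_mulVec_eq_transpose_mulVec_dotProduct, heig, sub_eq_iff_eq_add.mp hgen,
    add_dotProduct, smul_dotProduct, smul_eq_mul]
  field_simp
  ring

end Matrix

theorem first_integral_two_generalized_eigenvectors_general
    (n : ℕ) (A : Matrix (Fin n) (Fin n) ℝ)
    (ν₀₁ ν₁₁ ν₀₂ ν₁₂ : Fin n → ℝ) (lam₁ lam₂ : ℝ)
    (heig₁ : Aᵀ.mulVec ν₀₁ = lam₁ • ν₀₁)
    (hgen₁ : Aᵀ.mulVec ν₁₁ - lam₁ • ν₁₁ = ν₀₁)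
    (heig₂ : Aᵀ.mulVec ν₀₂ = lam₂ • ν₀₂)
    (hgen₂ : Aᵀ.mulVec ν₁₂ - lam₂ • ν₁₂ = ν₀₂) :
    ∀ x : Fin n → ℝ, ν₀₁ ⬝ᵥ x ≠ 0 → ν₀₂ ⬝ᵥ x ≠ 0 →
      fderiv ℝ (fun y => (ν₁₁ ⬝ᵥ y) / (ν₀₁ ⬝ᵥ y) - (ν₁₂ ⬝ᵥ y) / (ν₀₂ ⬝ᵥ y))
        x (A.mulVec x) = 0 := by
  intro x h₁ h₂
  rw [fderiv_fun_sub (differentiableAt_dotProduct_div ν₁₁ h₁)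
      (differentiableAt_dotProduct_div ν₁₂ h₂), _root_.sub_apply,
    fderiv_dotProduct_div_mulVec_eq_one heig₁ hgen₁ h₁,
    fderiv_dotProduct_div_mulVec_eq_one heig₂ hgen₂ h₂, sub_self]

/-- Theorem 1.7: for real eigenvalues `λ₁, λ₂` of `B = Aᵀ` with eigenvectors
`ν⁰¹, ν⁰²` and first-order generalized eigenvectors `ν¹¹, ν¹²`
(`(B − λ₁I)ν¹¹ = ν⁰¹`, `(B − λ₂I)ν¹² = ν⁰²`), the function
`F(x) = (ν¹¹·x)/(ν⁰¹·x) − (ν¹²·x)/(ν⁰²·x)` is an autonomous first integral of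
`dx/dt = Ax` wherever `ν⁰¹·x ≠ 0` and `ν⁰²·x ≠ 0`. -/
theorem first_integral_two_generalized_eigenvectors
    (n : ℕ) (A : Matrix (Fin n) (Fin n) ℝ)
    (ν₀₁ ν₁₁ ν₀₂ ν₁₂ : Fin n → ℝ) (lam₁ lam₂ : ℝ)
    (hν₀₁ : ν₀₁ ≠ 0) (hν₀₂ : ν₀₂ ≠ 0)
    (heig₁ : Aᵀ.mulVec ν₀₁ = lam₁ • ν₀₁)
    (hgen₁ : Aᵀ.mulVec ν₁₁ - lam₁ • ν₁₁ = ν₀₁)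
    (heig₂ : Aᵀ.mulVec ν₀₂ = lam₂ • ν₀₂)
    (hgen₂ : Aᵀ.mulVec ν₁₂ - lam₂ • ν₁₂ = ν₀₂) :
    ∀ x : Fin n → ℝ, ν₀₁ ⬝ᵥ x ≠ 0 → ν₀₂ ⬝ᵥ x ≠ 0 →
      fderiv ℝ (fun y => (ν₁₁ ⬝ᵥ y) / (ν₀₁ ⬝ᵥ y) - (ν₁₂ ⬝ᵥ y) / (ν₀₂ ⬝ᵥ y))
        x (A.mulVec x) = 0 :=
  first_integral_two_generalized_eigenvectors_general n A ν₀₁ ν₁₁ ν₀₂ ν₁₂ lam₁ lam₂ heig₁ hgen₁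
    heig₂ hgen₂
end
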